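/- Let (a,s;n,k) and (a−θ,s−θ;n,k) both lie in the domain of the Marstrand index M (i.e., 1 ≤ k < n, a, a−θ ∈ (0,n], s, s−θ > 0) with θ ≥ 0. Then M(a−θ, s−θ; n, k) ≤ M(a,s;n,k). -/
import Mathlib


private lemma mIndex_leaf (A kl Δ T T' : ℝ) (hA : 1 ≤ A) (hΔ : 1 ≤ Δ)
    (hT : 0 ≤ T) (hT' : T' ≤ 1) :
    -(A * (kl + Δ)) + T' ≤ -(A * kl) + T := by nlinarith

/-- Core comparison of the Type 2/3 values at two points on the same diagonal. -/
lemma mIndex_core (k m l m' l' : ℤ) (β γ β' γ' : ℝ)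
    (hβ0 : 0 < β) (hβ1 : β ≤ 1) (hγ0 : 0 < γ) (hγ1 : γ ≤ 1)
    (hβ0' : 0 < β') (hβ1' : β' ≤ 1) (hγ0' : 0 < γ') (hγ1' : γ' ≤ 1)
    (heq : (m:ℝ) + β - ((m':ℝ) + β') = (l:ℝ) + γ - ((l':ℝ) + γ'))
    (hθ : 0 ≤ (m:ℝ) + β - ((m':ℝ) + β'))
    (hsa : (l:ℝ) + γ ≤ (m:ℝ) + β)
    (hsa' : (l':ℝ) + γ' ≤ (m':ℝ) + β')
    (hsk : (l:ℝ) + γ ≤ (k:ℝ)) (hsk' : (l':ℝ) + γ' ≤ (k:ℝ)) :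
    (if β' < γ' then -(((m':ℝ) - l') * ((k:ℝ) - l')) + max (2*γ' - (β'+1)) 0
     else -(((m':ℝ) + 1 - l') * ((k:ℝ) - l')) + max (2*γ' - β') 0)
    ≤ (if β < γ then -(((m:ℝ) - l) * ((k:ℝ) - l)) + max (2*γ - (β+1)) 0
     else -(((m:ℝ) + 1 - l) * ((k:ℝ) - l)) + max (2*γ - β) 0) := by
  have hll' : l' ≤ l := by
    have h : (l':ℝ) < (l:ℝ) + 1 := by linarith [heq ▸ hθ]
    exact_mod_cast Int.lt_add_one_iff.mp (by exact_mod_cast h)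
  have hmm' : m' ≤ m := by
    have h : (m':ℝ) < (m:ℝ) + 1 := by linarith
    exact_mod_cast Int.lt_add_one_iff.mp (by exact_mod_cast h)
  have hlk : l + 1 ≤ k := by
    have h : (l:ℝ) < (k:ℝ) := by linarith
    exact_mod_cast Int.add_one_le_iff.mpr (by exact_mod_cast h)
  have hlk' : l' + 1 ≤ k := by
    have h : (l':ℝ) < (k:ℝ) := by linarith
    exact_mod_cast Int.add_one_le_iff.mpr (by exact_mod_cast h)
  have heZ : (((m - m') - (l - l') : ℤ) : ℝ) = (γ - γ') - (β - β') := by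
    push_cast; linarith
  split_ifs with hc' hc hc
  · -- type 2' ≤ type 2 : e = 0
    have he : (m - m') - (l - l') = 0 := by
      have h1 : (((m - m') - (l - l') : ℤ) : ℝ) < 1 := by rw [heZ]; linarith
      have h2 : (-1:ℝ) < (((m - m') - (l - l') : ℤ) : ℝ) := by rw [heZ]; linarith
      have h1' : (m - m') - (l - l') < 1 := by exact_mod_cast h1
      have h2' : (-1:ℤ) < (m - m') - (l - l') := by exact_mod_cast h2
      omega
    have hlm : l + 1 ≤ m := by
      have h : (l:ℝ) < (m:ℝ) := by linarith
      exact_mod_cast Int.add_one_le_iff.mpr (by exact_mod_cast h)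
    have hml' : (m':ℝ) - l' = (m:ℝ) - l := by
      have h2 : m' - l' = m - l := by omega
      have h := congrArg (fun z : ℤ => (z:ℝ)) h2
      push_cast at h; linarith
    rcases eq_or_lt_of_le hll' with hΔ | hΔ
    · have hm : m' = m := by omega
      subst hΔ hm
      have hmax : max (2*γ' - (β'+1)) 0 ≤ max (2*γ - (β+1)) 0 :=
        max_le_max (by linarith) le_rfl
      linarith
    · have hΔ1 : (l':ℝ) + 1 ≤ (l:ℝ) := by exact_mod_cast hΔ
      have hA : (1:ℝ) ≤ (m:ℝ) - l := by
        have : (l:ℝ) + 1 ≤ (m:ℝ) := by exact_mod_cast hlm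
        linarith
      have hT : (0:ℝ) ≤ max (2*γ - (β+1)) 0 := le_max_right _ _
      have hT' : max (2*γ' - (β'+1)) 0 ≤ 1 := max_le (by linarith) (by linarith)
      have e1 : ((m':ℝ) - l') * ((k:ℝ) - l')
          = ((m:ℝ) - l) * (((k:ℝ) - l) + ((l:ℝ) - l')) := by rw [hml']; ring
      have := mIndex_leaf ((m:ℝ) - l) ((k:ℝ) - l) ((l:ℝ) - l')
        (max (2*γ - (β+1)) 0) (max (2*γ' - (β'+1)) 0) hA (by linarith) hT hT'
      linarith [this, e1]
  · -- type 2' ≤ type 3 : e = -1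
    push_neg at hc
    have he : (m - m') - (l - l') = -1 := by
      have h1 : (((m - m') - (l - l') : ℤ) : ℝ) < 0 := by rw [heZ]; linarith
      have h2 : (-2:ℝ) < (((m - m') - (l - l') : ℤ) : ℝ) := by rw [heZ]; linarith
      have h1' : (m - m') - (l - l') < 0 := by exact_mod_cast h1
      have h2' : (-2:ℤ) < (m - m') - (l - l') := by exact_mod_cast h2
      omega
    have hlm : l ≤ m := by
      have h : (l:ℝ) < (m:ℝ) + 1 := by linarith
      exact_mod_cast Int.lt_add_one_iff.mp (by exact_mod_cast h)
    have hΔZ : l' + 1 ≤ l := by omega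
    have hΔ1 : (l':ℝ) + 1 ≤ (l:ℝ) := by exact_mod_cast hΔZ
    have hml' : (m':ℝ) - l' = (m:ℝ) + 1 - l := by
      have h2 : m' - l' = m + 1 - l := by omega
      have h := congrArg (fun z : ℤ => (z:ℝ)) h2
      push_cast at h; linarith
    have hA : (1:ℝ) ≤ (m:ℝ) + 1 - l := by
      have : (l:ℝ) ≤ (m:ℝ) := by exact_mod_cast hlm
      linarith
    have hT : (0:ℝ) ≤ max (2*γ - β) 0 := le_max_right _ _
    have hT' : max (2*γ' - (β'+1)) 0 ≤ 1 := max_le (by linarith) (by linarith)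
    have e1 : ((m':ℝ) - l') * ((k:ℝ) - l')
        = ((m:ℝ) + 1 - l) * (((k:ℝ) - l) + ((l:ℝ) - l')) := by rw [hml']; ring
    have := mIndex_leaf ((m:ℝ) + 1 - l) ((k:ℝ) - l) ((l:ℝ) - l')
      (max (2*γ - β) 0) (max (2*γ' - (β'+1)) 0) hA (by linarith) hT hT'
    linarith [this, e1]
  · -- type 3' ≤ type 2 : e = 1
    push_neg at hc'
    have he : (m - m') - (l - l') = 1 := by
      have h1 : (((m - m') - (l - l') : ℤ) : ℝ) < 2 := by rw [heZ]; linarith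
      have h2 : (0:ℝ) < (((m - m') - (l - l') : ℤ) : ℝ) := by rw [heZ]; linarith
      have h1' : (m - m') - (l - l') < 2 := by exact_mod_cast h1
      have h2' : (0:ℤ) < (m - m') - (l - l') := by exact_mod_cast h2
      omega
    have hlm : l + 1 ≤ m := by
      have h : (l:ℝ) < (m:ℝ) := by linarith
      exact_mod_cast Int.add_one_le_iff.mpr (by exact_mod_cast h)
    have hml' : (m':ℝ) + 1 - l' = (m:ℝ) - l := by
      have h2 : m' + 1 - l' = m - l := by omega
      have h := congrArg (fun z : ℤ => (z:ℝ)) h2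
      push_cast at h; linarith
    rcases eq_or_lt_of_le hll' with hΔ | hΔ
    · subst hΔ
      have hm : m = m' + 1 := by omega
      have hmR : (m:ℝ) = (m':ℝ) + 1 := by exact_mod_cast hm
      have hmax : max (2*γ' - β') 0 ≤ max (2*γ - (β+1)) 0 :=
        max_le_max (by linarith) le_rfl
      have e1 : ((m':ℝ) + 1 - l') * ((k:ℝ) - l') = ((m:ℝ) - l') * ((k:ℝ) - l') := by
        rw [hml']
      linarith [e1, hmax]
    · have hΔ1 : (l':ℝ) + 1 ≤ (l:ℝ) := by exact_mod_cast hΔ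
      have hA : (1:ℝ) ≤ (m:ℝ) - l := by
        have : (l:ℝ) + 1 ≤ (m:ℝ) := by exact_mod_cast hlm
        linarith
      have hT : (0:ℝ) ≤ max (2*γ - (β+1)) 0 := le_max_right _ _
      have hT' : max (2*γ' - β') 0 ≤ 1 := max_le (by linarith) (by linarith)
      have e1 : ((m':ℝ) + 1 - l') * ((k:ℝ) - l')
          = ((m:ℝ) - l) * (((k:ℝ) - l) + ((l:ℝ) - l')) := by rw [hml']; ring
      have := mIndex_leaf ((m:ℝ) - l) ((k:ℝ) - l) ((l:ℝ) - l')
        (max (2*γ - (β+1)) 0) (max (2*γ' - β') 0) hA (by linarith) hT hT'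
      linarith [this, e1]
  · -- type 3' ≤ type 3 : e = 0
    push_neg at hc hc'
    have he : (m - m') - (l - l') = 0 := by
      have h1 : (((m - m') - (l - l') : ℤ) : ℝ) < 1 := by rw [heZ]; linarith
      have h2 : (-1:ℝ) < (((m - m') - (l - l') : ℤ) : ℝ) := by rw [heZ]; linarith
      have h1' : (m - m') - (l - l') < 1 := by exact_mod_cast h1
      have h2' : (-1:ℤ) < (m - m') - (l - l') := by exact_mod_cast h2
      omega
    have hlm : l ≤ m := by
      have h : (l:ℝ) < (m:ℝ) + 1 := by linarith
      exact_mod_cast Int.lt_add_one_iff.mp (by exact_mod_cast h)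
    have hml' : (m':ℝ) + 1 - l' = (m:ℝ) + 1 - l := by
      have h2 : m' - l' = m - l := by omega
      have h := congrArg (fun z : ℤ => (z:ℝ)) h2
      push_cast at h; linarith
    rcases eq_or_lt_of_le hll' with hΔ | hΔ
    · have hm : m' = m := by omega
      subst hΔ hm
      have hmax : max (2*γ' - β') 0 ≤ max (2*γ - β) 0 :=
        max_le_max (by linarith) le_rfl
      linarith
    · have hΔ1 : (l':ℝ) + 1 ≤ (l:ℝ) := by exact_mod_cast hΔ
      have hA : (1:ℝ) ≤ (m:ℝ) + 1 - l := by
        have : (l:ℝ) ≤ (m:ℝ) := by exact_mod_cast hlm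
        linarith
      have hT : (0:ℝ) ≤ max (2*γ - β) 0 := le_max_right _ _
      have hT' : max (2*γ' - β') 0 ≤ 1 := max_le (by linarith) (by linarith)
      have e1 : ((m':ℝ) + 1 - l') * ((k:ℝ) - l')
          = ((m:ℝ) + 1 - l) * (((k:ℝ) - l) + ((l:ℝ) - l')) := by rw [hml']; ring
      have := mIndex_leaf ((m:ℝ) + 1 - l) ((k:ℝ) - l) ((l:ℝ) - l')
        (max (2*γ - β) 0) (max (2*γ' - β') 0) hA (by linarith) hT hT'
      linarith [this, e1]


/-- The Marstrand index `M(a,s;n,k)` of the paper, an element of `EReal`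
(with `⊥ = -∞` for Type 4).  Write the canonical expressions `a = m + β`,
`s = l + γ` with `m, l ∈ ℕ` and `β, γ ∈ (0,1]` (so `m = ⌈a⌉ - 1`, etc.).
Type 4: if `s ≤ a - (n-k)`, `M = -∞`.  Type 1: if `s > min a k`, `M = k(n-k)`.
Type 2 (`γ ∈ (β,1]`): `M = k(n-k) - (m-l)(k-l) + max (2γ-(β+1)) 0`.
Type 3 (`γ ∈ (0,β]`): `M = k(n-k) - (m+1-l)(k-l) + max (2γ-β) 0`. -/
noncomputable def mIndex (n k : ℕ) (a s : ℝ) : EReal :=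
  if s ≤ a - ((n : ℝ) - k) then ⊥
  else if min a k < s then ((k * ((n : ℝ) - k) : ℝ) : EReal)
  else
    let m : ℤ := ⌈a⌉ - 1
    let β : ℝ := a - m
    let l : ℤ := ⌈s⌉ - 1
    let γ : ℝ := s - l
    if β < γ then
      ((k * ((n : ℝ) - k) - ((m : ℝ) - l) * ((k : ℝ) - l)
        + max (2 * γ - (β + 1)) 0 : ℝ) : EReal)
    else
      ((k * ((n : ℝ) - k) - ((m : ℝ) + 1 - l) * ((k : ℝ) - l)
        + max (2 * γ - β) 0 : ℝ) : EReal)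

/-- If `(a,s;n,k)` and `(a-θ,s-θ;n,k)` both lie in the domain of the
Marstrand index (`1 ≤ k < n`, `a, a-θ ∈ (0,n]`, `s, s-θ > 0`) with `θ ≥ 0`, then
`M(a-θ,s-θ;n,k) ≤ M(a,s;n,k)`. -/
theorem stmt_15 (n k : ℕ) (hk1 : 1 ≤ k) (hkn : k < n) (a s θ : ℝ) (hθ : 0 ≤ θ)
    (ha : 0 < a) (han : a ≤ n) (hs : 0 < s)
    (ha' : 0 < a - θ) (hs' : 0 < s - θ) :
    mIndex n k (a - θ) (s - θ) ≤ mIndex n k a s := by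
  by_cases h4 : s - θ ≤ a - θ - ((n:ℝ) - k)
  · rw [mIndex, if_pos h4]; exact bot_le
  by_cases h4' : s ≤ a - ((n:ℝ) - k)
  · exact absurd (by linarith : s - θ ≤ a - θ - ((n:ℝ) - k)) h4
  rw [mIndex, mIndex, if_neg h4, if_neg h4']
  have hca1 := Int.ceil_lt_add_one (a - θ)
  have hca2 := Int.le_ceil (a - θ)
  have hcs1 := Int.ceil_lt_add_one (s - θ)
  have hcs2 := Int.le_ceil (s - θ)
  by_cases h1 : min a (k:ℝ) < s
  · rw [if_pos h1]
    by_cases h1' : min (a - θ) (k:ℝ) < s - θ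
    · rw [if_pos h1']
    · rw [if_neg h1']
      dsimp only
      push_neg at h1'
      have hsa' : s - θ ≤ a - θ := le_trans h1' (min_le_left _ _)
      have hsk' : s - θ ≤ (k:ℝ) := le_trans h1' (min_le_right _ _)
      have hSk : (⌈s - θ⌉ : ℝ) ≤ (k:ℝ) := by
        have : (⌈s - θ⌉ : ℤ) ≤ (k:ℤ) := Int.ceil_le.mpr (by exact_mod_cast hsk')
        exact_mod_cast this
      split_ifs with hc
      · -- Type 2 at the shifted point
        have hSA : (⌈s - θ⌉ : ℝ) + 1 ≤ (⌈a - θ⌉ : ℝ) := by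
          have h : (⌈s - θ⌉ : ℤ) < ⌈a - θ⌉ := by
            have : (⌈s - θ⌉ : ℝ) < (⌈a - θ⌉ : ℝ) := by push_cast at hc; linarith
            exact_mod_cast this
          exact_mod_cast h
        rw [EReal.coe_le_coe_iff]
        push_cast at hc ⊢
        have hT : (2 * (s - θ - ((⌈s - θ⌉:ℝ) - 1)) - (a - θ - ((⌈a - θ⌉:ℝ) - 1) + 1)) ⊔ 0
            ≤ 1 - (a - θ - ((⌈a - θ⌉:ℝ) - 1)) := max_le (by linarith) (by linarith)
        nlinarith [mul_nonneg (by linarith : (0:ℝ) ≤ (⌈a - θ⌉:ℝ) - (⌈s - θ⌉:ℝ) - 1)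
          (by linarith : (0:ℝ) ≤ (k:ℝ) - (⌈s - θ⌉:ℝ)), hT]
      · -- Type 3 at the shifted point
        push_neg at hc
        have hSA : (⌈s - θ⌉ : ℝ) ≤ (⌈a - θ⌉ : ℝ) := by
          have h : (⌈s - θ⌉ : ℤ) ≤ ⌈a - θ⌉ := Int.ceil_le_ceil hsa'
          exact_mod_cast h
        rw [EReal.coe_le_coe_iff]
        push_cast at hc ⊢
        have hT : (2 * (s - θ - ((⌈s - θ⌉:ℝ) - 1)) - (a - θ - ((⌈a - θ⌉:ℝ) - 1))) ⊔ 0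
            ≤ s - θ - ((⌈s - θ⌉:ℝ) - 1) := max_le (by linarith) (by linarith)
        nlinarith [mul_nonneg (by linarith : (0:ℝ) ≤ (⌈a - θ⌉:ℝ) - (⌈s - θ⌉:ℝ))
          (by linarith : (0:ℝ) ≤ (k:ℝ) - (⌈s - θ⌉:ℝ)), hT]
  · rw [if_neg h1]
    have h1' : ¬ (min (a - θ) (k:ℝ) < s - θ) := by
      push_neg at h1 ⊢
      exact le_min (by linarith [min_le_left a (k:ℝ)]) (by linarith [min_le_right a (k:ℝ)])
    rw [if_neg h1']
    dsimp only
    push_neg at h1 h1'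
    have hsa : s ≤ a := le_trans h1 (min_le_left _ _)
    have hsk : s ≤ (k:ℝ) := le_trans h1 (min_le_right _ _)
    have hsa' : s - θ ≤ a - θ := le_trans h1' (min_le_left _ _)
    have hsk' : s - θ ≤ (k:ℝ) := le_trans h1' (min_le_right _ _)
    have hca1' := Int.ceil_lt_add_one a
    have hca2' := Int.le_ceil a
    have hcs1' := Int.ceil_lt_add_one s
    have hcs2' := Int.le_ceil s
    have key := mIndex_core (k:ℤ) (⌈a⌉ - 1) (⌈s⌉ - 1) (⌈a - θ⌉ - 1) (⌈s - θ⌉ - 1)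
      (a - ((⌈a⌉ - 1 : ℤ) : ℝ)) (s - ((⌈s⌉ - 1 : ℤ) : ℝ))
      (a - θ - ((⌈a - θ⌉ - 1 : ℤ) : ℝ)) (s - θ - ((⌈s - θ⌉ - 1 : ℤ) : ℝ))
      (by push_cast; linarith) (by push_cast; linarith)
      (by push_cast; linarith) (by push_cast; linarith)
      (by push_cast; linarith) (by push_cast; linarith)
      (by push_cast; linarith) (by push_cast; linarith)
      (by push_cast; ring) (by push_cast; linarith)
      (by push_cast; linarith) (by push_cast; linarith)
      (by push_cast; linarith) (by push_cast; linarith)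
    simp only [Int.cast_natCast] at key
    split_ifs at key ⊢ with hc1 hc2 hc2 <;>
      · rw [EReal.coe_le_coe_iff]
        linarith [key]
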